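/- For every memoryless randomized algorithm given by an acceptance-probability function F, every k ≥ 1 and every p ∈ (0,1), there exists a finite list σ of intervals with at most k distinct lengths such that opt(σ) ≥ 2k and, under the distribution run_F(σ), the final solution has at most one element with probability at least p. (That is, no memoryless randomized algorithm achieves a competitive ratio better than 2k for unweighted interval selection with revocable decisions and k different lengths.) -/

import Mathlib

open scoped Classical

/-- An interval: a pair `(s, f)` of reals with `s < f`, identified with `[s, f) ⊆ ℝ`. -/
structure Ivl where
  s : ℝ
  f : ℝ
  lt : s < f

namespace Ivl

noncomputable instance : DecidableEq Ivl := fun a b =>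
  decidable_of_iff (a.s = b.s ∧ a.f = b.f) (by cases a; cases b; simp)

/-- The set of points covered by an interval. -/
def toSet (I : Ivl) : Set ℝ := Set.Ico I.s I.f

/-- The length of an interval. -/
def length (I : Ivl) : ℝ := I.f - I.s

/-- Two intervals conflict if their point sets intersect. -/
def Conflict (I J : Ivl) : Prop := (I.toSet ∩ J.toSet).Nonempty

/-- A finite set of intervals is feasible (pairwise disjoint) if no two distinct members
conflict. -/
def Feasible (S : Finset Ivl) : Prop :=
  ∀ I ∈ S, ∀ J ∈ S, I ≠ J → ¬ Conflict I J

end Ivl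

/-- An online interval-selection algorithm with revocable acceptances: a function from finite
lists of intervals to finite sets of intervals such that the output consists of intervals
occurring in the input, is pairwise disjoint, and each new output is contained in the previous
output together with the newly arrived interval. -/
structure OnlineAlg where
  run : List Ivl → Finset Ivl
  mem_of_run : ∀ σ : List Ivl, ∀ I ∈ run σ, I ∈ σ
  feasible_run : ∀ σ : List Ivl, Ivl.Feasible (run σ)
  revocable : ∀ (σ : List Ivl) (I : Ivl), run (σ ++ [I]) ⊆ insert I (run σ)

/-- `opt σ` is the maximum cardinality of a pairwise-disjoint finite set of intervals all of
which occur in `σ`. -/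
noncomputable def opt (σ : List Ivl) : ℕ :=
  (σ.toFinset.powerset.filter (fun T => Ivl.Feasible T)).sup Finset.card

/-- The solution obtained from `S` by taking the new interval `I` and discarding all members
of `S` conflicting with it. -/
noncomputable def takeNew (S : Finset Ivl) (I : Ivl) : Finset Ivl :=
  insert I (S.filter (fun J => ¬ Ivl.Conflict J I))

/-- One step of a memoryless randomized algorithm with acceptance-probability function `F`:
given current solution `S` and arrival `I`, move to `takeNew S I` with probability `F I S`
and stay at `S` otherwise. -/
noncomputable def memStepPMF (F : Ivl → Finset Ivl → ℝ)
    (hF : ∀ (I : Ivl) (S : Finset Ivl), F I S ∈ Set.Icc (0 : ℝ) 1)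
    (I : Ivl) (S : Finset Ivl) : PMF (Finset Ivl) :=
  (PMF.bernoulli (Real.toNNReal (F I S))
      (Real.toNNReal_le_one.mpr (hF I S).2)).bind
    (fun b => PMF.pure (if b then takeNew S I else S))

/-- Run of a memoryless randomized algorithm from a given distribution over solutions. -/
noncomputable def memRunAux (F : Ivl → Finset Ivl → ℝ)
    (hF : ∀ (I : Ivl) (S : Finset Ivl), F I S ∈ Set.Icc (0 : ℝ) 1) :
    PMF (Finset Ivl) → List Ivl → PMF (Finset Ivl)
  | μ, [] => μ
  | μ, I :: σ => memRunAux F hF (μ.bind (fun S => memStepPMF F hF I S)) σ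

/-- `memRun F hF σ` is the distribution over final solutions of the memoryless randomized
algorithm with acceptance-probability function `F` run on the arrival sequence `σ`,
starting from the empty solution. -/
noncomputable def memRun (F : Ivl → Finset Ivl → ℝ)
    (hF : ∀ (I : Ivl) (S : Finset Ivl), F I S ∈ Set.Icc (0 : ℝ) 1)
    (σ : List Ivl) : PMF (Finset Ivl) :=
  memRunAux F hF (PMF.pure ∅) σ

/-!
The adversary presents every interval many times in a row. A memoryless algorithm in state `S`
either never accepts an interval `C` (when `F C S = 0`) or, after enough repetitions, has
accepted it with probability as close to `1` as we like; so up to an arbitrarily small loss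
of probability it behaves deterministically, and the adversary can adapt to it.

The construction keeps a zone `Z` contained in every interval of the current solution, which
has at most one element; an interval placed inside `Z` therefore conflicts with the whole
solution. One stage uses intervals of a single length inside `Z`, at most four repeated
blocks, and ends with two disjoint presented intervals, a subzone `Z'` of `Z` avoiding both,
and a solution of at most one interval containing `Z'`. Nesting `k` stages gives `2k` pairwise
disjoint intervals with `k` lengths, while with probability at least `r ^ (4 * k)`, for any
chosen `r < 1`, the final solution still has at most one element.
-/

open scoped ENNReal

namespace Ivl

lemma conflict_iff {I J : Ivl} : I.Conflict J ↔ I.s < J.f ∧ J.s < I.f := by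
  simp only [Conflict, toSet, Set.Ico_inter_Ico, Set.nonempty_Ico, max_lt_iff, lt_min_iff,
    I.lt, J.lt, true_and, and_true]
  exact and_comm

lemma conflict_comm {I J : Ivl} : I.Conflict J ↔ J.Conflict I := by
  rw [conflict_iff, conflict_iff]
  exact and_comm

lemma conflict_self (I : Ivl) : I.Conflict I :=
  conflict_iff.2 ⟨I.lt, I.lt⟩

lemma toSet_subset_toSet_iff {I J : Ivl} : I.toSet ⊆ J.toSet ↔ J.s ≤ I.s ∧ I.f ≤ J.f :=
  Set.Ico_subset_Ico_iff I.lt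

lemma Conflict.mono_right {I J J' : Ivl} (h : I.Conflict J) (hJ : J.toSet ⊆ J'.toSet) :
    I.Conflict J' :=
  h.mono (Set.inter_subset_inter_right _ hJ)

lemma notMem_of_forall_not_conflict {S : Finset Ivl} {I : Ivl}
    (hI : ∀ J ∈ S, ¬ I.Conflict J) : I ∉ S :=
  fun h => hI I h I.conflict_self

lemma Feasible.insert {S : Finset Ivl} {I : Ivl} (hS : Feasible S)
    (hI : ∀ J ∈ S, ¬ I.Conflict J) : Feasible (insert I S) := by
  simp only [Feasible, Finset.mem_insert]
  rintro J (rfl | hJ) K (rfl | hK) hJK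
  · exact absurd rfl hJK
  · exact hI K hK
  · exact fun h => hI J hJ (conflict_comm.1 h)
  · exact hS J hJ K hK hJK

lemma feasible_insert_insert {G : Finset Ivl} {G₁ G₂ Z : Ivl} (hG : Feasible G)
    (hGZ : ∀ I ∈ G, I.toSet ⊆ Z.toSet) (h₁₂ : ¬ G₁.Conflict G₂) (h₁ : ¬ G₁.Conflict Z)
    (h₂ : ¬ G₂.Conflict Z) :
    Feasible (insert G₁ (insert G₂ G)) ∧ (insert G₁ (insert G₂ G)).card = G.card + 2 := by
  have hG₂ : ∀ J ∈ G, ¬ G₂.Conflict J := fun J hJ hc => h₂ (hc.mono_right (hGZ J hJ))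
  have hG₁ : ∀ J ∈ insert G₂ G, ¬ G₁.Conflict J := by
    simp only [Finset.forall_mem_insert]
    exact ⟨h₁₂, fun J hJ hc => h₁ (hc.mono_right (hGZ J hJ))⟩
  refine ⟨(hG.insert hG₂).insert hG₁, ?_⟩
  rw [Finset.card_insert_of_notMem (notMem_of_forall_not_conflict hG₁),
    Finset.card_insert_of_notMem (notMem_of_forall_not_conflict hG₂)]

def ofGrid (c m : ℝ) (hm : 0 < m) (u v : ℝ) (huv : u < v := by norm_num) : Ivl :=
  ⟨c + u * m, c + v * m, by nlinarith⟩

section ofGrid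

variable {c m : ℝ} {hm : 0 < m} {u v u' v' : ℝ} {huv : u < v} {huv' : u' < v'}

lemma conflict_ofGrid_iff :
    (ofGrid c m hm u v huv).Conflict (ofGrid c m hm u' v' huv') ↔ u < v' ∧ u' < v := by
  simp only [conflict_iff, ofGrid, add_lt_add_iff_left, mul_lt_mul_iff_left₀ hm]

lemma ofGrid_subset_ofGrid_iff :
    (ofGrid c m hm u v huv).toSet ⊆ (ofGrid c m hm u' v' huv').toSet ↔ u' ≤ u ∧ v ≤ v' := by
  simp only [toSet_subset_toSet_iff, ofGrid, add_le_add_iff_left, mul_le_mul_iff_left₀ hm]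

lemma length_ofGrid : (ofGrid c m hm u v huv).length = (v - u) * m := by
  simp only [length, ofGrid]
  ring

end ofGrid

lemma exists_eq_ofGrid (Z : Ivl) {n : ℝ} (hn : 0 < n) : ∃ c m hm, Z = ofGrid c m hm 0 n hn := by
  refine ⟨Z.s, Z.length / n, div_pos (sub_pos.2 Z.lt) hn, ?_⟩
  cases Z
  simp only [ofGrid, length, zero_mul, add_zero, Ivl.mk.injEq, true_and]
  field_simp
  ring

end Ivl

open Ivl

lemma List.card_toFinset_map_le_one {α β : Type*} [DecidableEq β] {f : α → β} {l : List α}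
    {b : β} (h : ∀ a ∈ l, f a = b) : (l.map f).toFinset.card ≤ 1 := by
  refine (Finset.card_le_card fun x hx => ?_).trans (Finset.card_singleton b).le
  obtain ⟨a, ha, rfl⟩ := List.mem_map.1 (List.mem_toFinset.1 hx)
  exact Finset.mem_singleton.2 (h a ha)

lemma card_le_opt {σ : List Ivl} {G : Finset Ivl} (hG : G ⊆ σ.toFinset) (hf : Feasible G) :
    G.card ≤ opt σ :=
  Finset.le_sup (f := Finset.card) (Finset.mem_filter.2 ⟨Finset.mem_powerset.2 hG, hf⟩)

/-- An arrival inside `Z` then evicts all of `s`. -/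
def Covers (s : Finset Ivl) (Z : Ivl) : Prop := ∀ J ∈ s, Z.toSet ⊆ J.toSet

lemma Covers.mono {s : Finset Ivl} {Z Z' : Ivl} (h : Covers s Z) (hZ : Z'.toSet ⊆ Z.toSet) :
    Covers s Z' :=
  fun J hJ => hZ.trans (h J hJ)

lemma covers_singleton {X Z : Ivl} : Covers {X} Z ↔ Z.toSet ⊆ X.toSet := by
  simp [Covers]

lemma takeNew_eq_singleton {s : Finset Ivl} {C : Ivl} (h : ∀ J ∈ s, J.Conflict C) :
    takeNew s C = {C} := by
  rw [takeNew, Finset.filter_false_of_mem fun J hJ hn => hn (h J hJ)]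
  rfl

lemma takeNew_takeNew (s : Finset Ivl) (C : Ivl) : takeNew (takeNew s C) C = takeNew s C := by
  rw [takeNew, takeNew, Finset.filter_insert, if_neg (not_not.2 C.conflict_self),
    Finset.filter_filter]
  simp only [and_self]

section Memoryless

variable {F : Ivl → Finset Ivl → ℝ} {hF : ∀ (I : Ivl) (S : Finset Ivl), F I S ∈ Set.Icc (0 : ℝ) 1}

lemma memRunAux_append (μ : PMF (Finset Ivl)) (σ₁ σ₂ : List Ivl) :
    memRunAux F hF μ (σ₁ ++ σ₂) = memRunAux F hF (memRunAux F hF μ σ₁) σ₂ := by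
  induction σ₁ generalizing μ with
  | nil => rfl
  | cons I σ ih => exact ih _

lemma memRunAux_eq_bind (μ : PMF (Finset Ivl)) (σ : List Ivl) :
    memRunAux F hF μ σ = μ.bind fun s => memRunAux F hF (PMF.pure s) σ := by
  induction σ generalizing μ with
  | nil => exact (PMF.bind_pure μ).symm
  | cons I σ ih =>
    simp only [memRunAux, PMF.pure_bind]
    rw [ih, PMF.bind_bind]
    simp only [← ih]

set_option linter.deprecated false in
lemma memStepPMF_apply (C : Ivl) (s t : Finset Ivl) :
    memStepPMF F hF C s t = ENNReal.ofReal (F C s) * (if t = takeNew s C then 1 else 0) +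
      ENNReal.ofReal (1 - F C s) * (if t = s then 1 else 0) := by
  rw [memStepPMF, PMF.bind_apply, tsum_bool, add_comm]
  simp only [PMF.bernoulli_apply, cond_true, cond_false, if_true, Bool.false_eq_true, if_false,
    PMF.pure_apply, ENNReal.coe_sub, ENNReal.coe_one, ENNReal.ofReal_sub _ (hF C s).1,
    ENNReal.ofReal_one]
  congr

lemma memStepPMF_eq_pure {C : Ivl} {s : Finset Ivl} (h : F C s = 0 ∨ takeNew s C = s) :
    memStepPMF F hF C s = PMF.pure s := by
  ext t
  rcases h with h | h
  · simp [memStepPMF_apply, h, PMF.pure_apply]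
  · simp only [memStepPMF_apply, h, PMF.pure_apply, ← add_mul]
    rw [← ENNReal.ofReal_add (hF C s).1 (sub_nonneg.2 (hF C s).2), add_sub_cancel,
      ENNReal.ofReal_one, one_mul]
    congr

lemma memStepPMF_apply_takeNew {C : Ivl} {s : Finset Ivl} (h : takeNew s C ≠ s) :
    memStepPMF F hF C s (takeNew s C) = ENNReal.ofReal (F C s) := by
  simp [memStepPMF_apply, h]

lemma memStepPMF_apply_self {C : Ivl} {s : Finset Ivl} (h : takeNew s C ≠ s) :
    memStepPMF F hF C s s = ENNReal.ofReal (1 - F C s) := by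
  simp [memStepPMF_apply, h.symm]

variable (F hF) in
noncomputable def reachProb (σ : List Ivl) (s t : Finset Ivl) : ℝ≥0∞ :=
  memRunAux F hF (PMF.pure s) σ t

lemma reachProb_cons (C : Ivl) (σ : List Ivl) (s t : Finset Ivl) :
    reachProb F hF (C :: σ) s t = ∑' u, memStepPMF F hF C s u * reachProb F hF σ u t := by
  simp only [reachProb, memRunAux, PMF.pure_bind]
  rw [memRunAux_eq_bind, PMF.bind_apply]

lemma mul_reachProb_le_reachProb_append (σ₁ σ₂ : List Ivl) (s t u : Finset Ivl) :
    reachProb F hF σ₁ s t * reachProb F hF σ₂ t u ≤ reachProb F hF (σ₁ ++ σ₂) s u := by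
  unfold reachProb
  rw [memRunAux_append, memRunAux_eq_bind (memRunAux F hF (PMF.pure s) σ₁), PMF.bind_apply]
  exact ENNReal.le_tsum t

lemma reachProb_replicate_self {C : Ivl} {s : Finset Ivl}
    (h : memStepPMF F hF C s = PMF.pure s) (n : ℕ) :
    reachProb F hF (List.replicate n C) s s = 1 := by
  induction n with
  | zero => exact PMF.pure_apply_self s
  | succ n ih =>
    rw [List.replicate_succ, reachProb_cons, h, tsum_eq_single s fun u hu => by
      rw [PMF.pure_apply_of_ne _ _ hu, zero_mul], PMF.pure_apply_self, one_mul, ih]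

lemma ofReal_one_sub_pow_le_reachProb {C : Ivl} {s : Finset Ivl} (h : takeNew s C ≠ s)
    (n : ℕ) :
    ENNReal.ofReal (1 - (1 - F C s) ^ n) ≤
      reachProb F hF (List.replicate n C) s (takeNew s C) := by
  induction n with
  | zero => simp
  | succ n ih =>
    obtain ⟨hq₀, hq₁⟩ := hF C s
    have hstay : reachProb F hF (List.replicate n C) (takeNew s C) (takeNew s C) = 1 :=
      reachProb_replicate_self (memStepPMF_eq_pure (Or.inr (takeNew_takeNew s C))) n
    -- the first arrival is accepted, after which the state never changes, or it is refused
    calc ENNReal.ofReal (1 - (1 - F C s) ^ (n + 1))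
        = ENNReal.ofReal (F C s) * 1 +
            ENNReal.ofReal (1 - F C s) * ENNReal.ofReal (1 - (1 - F C s) ^ n) := by
          rw [mul_one, ← ENNReal.ofReal_mul (by linarith),
            ← ENNReal.ofReal_add hq₀ (mul_nonneg (by linarith)
              (sub_nonneg.2 (pow_le_one₀ (by linarith) (by linarith))))]
          ring_nf
      _ ≤ ∑ u ∈ {takeNew s C, s},
            memStepPMF F hF C s u * reachProb F hF (List.replicate n C) u (takeNew s C) := by
          rw [Finset.sum_pair h, memStepPMF_apply_takeNew h, memStepPMF_apply_self h, hstay]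
          gcongr
      _ ≤ reachProb F hF (List.replicate (n + 1) C) s (takeNew s C) := by
          rw [List.replicate_succ, reachProb_cons]
          exact ENNReal.sum_le_tsum _

variable (F) in
/-- The state in which a long block of arrivals of `C` leaves `s`, with probability close
to `1`. -/
noncomputable def blockOutcome (C : Ivl) (s : Finset Ivl) : Finset Ivl :=
  if F C s = 0 then s else takeNew s C

lemma blockOutcome_eq_or_eq_singleton {C : Ivl} {s : Finset Ivl} (h : ∀ J ∈ s, J.Conflict C) :
    blockOutcome F C s = s ∨ blockOutcome F C s = {C} := by
  rw [blockOutcome, ← takeNew_eq_singleton h]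
  split_ifs <;> simp

lemma blockOutcome_of_covers {s : Finset Ivl} {Z C : Ivl} (hs : Covers s Z)
    (hC : C.toSet ⊆ Z.toSet) : blockOutcome F C s = s ∨ blockOutcome F C s = {C} :=
  blockOutcome_eq_or_eq_singleton fun J hJ =>
    conflict_comm.1 (C.conflict_self.mono_right (hC.trans (hs J hJ)))

lemma blockOutcome_singleton {X C : Ivl} (h : X.Conflict C) :
    blockOutcome F C {X} = {X} ∨ blockOutcome F C {X} = {C} :=
  blockOutcome_eq_or_eq_singleton fun J hJ => by rwa [Finset.mem_singleton.1 hJ]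

lemma exists_le_reachProb_replicate (C : Ivl) (s : Finset Ivl) {r : ℝ≥0∞} (hr : r < 1) :
    ∃ N ≠ 0, r ≤ reachProb F hF (List.replicate N C) s (blockOutcome F C s) := by
  by_cases hfix : F C s = 0 ∨ takeNew s C = s
  · have hout : blockOutcome F C s = s := by
      rcases hfix with h | h <;> simp [blockOutcome, h]
    refine ⟨1, one_ne_zero, ?_⟩
    rw [hout, reachProb_replicate_self (memStepPMF_eq_pure hfix)]
    exact hr.le
  · obtain ⟨hF0, hfix⟩ := not_or.1 hfix
    have hpos : 0 < F C s := lt_of_le_of_ne (hF C s).1 (Ne.symm hF0)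
    have hr' : r.toReal < 1 := ENNReal.toReal_lt_of_lt_ofReal (by rwa [ENNReal.ofReal_one])
    obtain ⟨N, hN⟩ := exists_pow_lt_of_lt_one (sub_pos.2 hr') (by linarith : 1 - F C s < 1)
    refine ⟨N, ?_, ?_⟩
    · rintro rfl
      linarith [ENNReal.toReal_nonneg (a := r), pow_zero (1 - F C s)]
    · rw [blockOutcome, if_neg hF0, ← ENNReal.ofReal_toReal hr.ne_top]
      exact (ENNReal.ofReal_le_ofReal (by linarith)).trans
        (ofReal_one_sub_pow_le_reachProb hfix N)

variable (F hF) in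
structure Reaches (Good : Ivl → Prop) (r : ℝ≥0∞) (n : ℕ) (s : Finset Ivl) (σ : List Ivl)
    (t : Finset Ivl) : Prop where
  good : ∀ I ∈ σ, Good I
  pow_le : r ^ n ≤ reachProb F hF σ s t

namespace Reaches

variable {Good Good' : Ivl → Prop} {r : ℝ≥0∞} {n n' : ℕ} {s t u : Finset Ivl} {σ σ' : List Ivl}

lemma nil : Reaches F hF Good r 0 s [] s :=
  ⟨by simp, by simp [reachProb, memRunAux]⟩

lemma append (h : Reaches F hF Good r n s σ t) (h' : Reaches F hF Good r n' t σ' u) :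
    Reaches F hF Good r (n + n') s (σ ++ σ') u := by
  refine ⟨fun I hI => ?_, ?_⟩
  · rcases List.mem_append.1 hI with hI | hI
    exacts [h.good I hI, h'.good I hI]
  · rw [pow_add]
    exact (mul_le_mul' h.pow_le h'.pow_le).trans (mul_reachProb_le_reachProb_append _ _ _ _ _)

lemma mono (h : Reaches F hF Good r n s σ t) (hGood : ∀ I, Good I → Good' I) (hr : r ≤ 1)
    (hn : n ≤ n') : Reaches F hF Good' r n' s σ t :=
  ⟨fun I hI => hGood I (h.good I hI), (pow_le_pow_right_of_le_one' hr hn).trans h.pow_le⟩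

lemma exists_block (h : Reaches F hF Good r n s σ t) {C : Ivl} (hC : Good C) (hr : r < 1) :
    ∃ N ≠ 0, Reaches F hF Good r (n + 1) s (σ ++ List.replicate N C) (blockOutcome F C t) := by
  obtain ⟨N, hN, hle⟩ := exists_le_reachProb_replicate (hF := hF) C t hr
  refine ⟨N, hN, h.append ⟨fun I hI => ?_, by rwa [pow_one]⟩⟩
  rwa [List.eq_of_mem_replicate hI]

end Reaches

/-- `G₁` and `G₂` go into the optimal solution; the next stage is played inside `Z'`. -/
def StageEnd (Z : Ivl) (σ : List Ivl) (t : Finset Ivl) : Prop :=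
  t.card ≤ 1 ∧ ∃ G₁ ∈ σ, ∃ G₂ ∈ σ, ∃ Z' : Ivl, Z'.toSet ⊆ Z.toSet ∧ Covers t Z' ∧
    ¬ G₁.Conflict G₂ ∧ ¬ G₁.Conflict Z' ∧ ¬ G₂.Conflict Z'

variable {Good : Ivl → Prop} {r : ℝ≥0∞} {n : ℕ} {s : Finset Ivl} {σ : List Ivl}

/-- From the solution `{X}`, a block of `Y` ends the stage whatever the algorithm does:
`P` is paired with `Y` if `Y` is refused and with `X` if it is accepted. -/
lemma Reaches.exists_stageEnd_of_partner {Z X Y P Zx Zy : Ivl} {n' : ℕ}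
    (h : Reaches F hF Good r n s σ {X}) (hr : r < 1) (hn : n < n') (hY : Good Y) (hX : X ∈ σ)
    (hP : P ∈ σ) (hXY : X.Conflict Y) (hPX : ¬ P.Conflict X) (hPY : ¬ P.Conflict Y)
    (hZx : Zx.toSet ⊆ X.toSet) (hZxZ : Zx.toSet ⊆ Z.toSet) (hYZx : ¬ Y.Conflict Zx)
    (hPZx : ¬ P.Conflict Zx)
    (hZy : Zy.toSet ⊆ Y.toSet) (hZyZ : Zy.toSet ⊆ Z.toSet) (hXZy : ¬ X.Conflict Zy)
    (hPZy : ¬ P.Conflict Zy) :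
    ∃ σ' t, Reaches F hF Good r n' s σ' t ∧ StageEnd Z σ' t := by
  obtain ⟨N, hN, h'⟩ := h.exists_block hY hr
  refine ⟨_, _, h'.mono (fun _ => id) hr.le hn, ?_⟩
  have hY' : Y ∈ σ ++ List.replicate N Y := by simp [hN]
  rcases blockOutcome_singleton (F := F) hXY with ho | ho <;> rw [ho]
  · exact ⟨by simp, P, List.mem_append_left _ hP, Y, hY', Zx, hZxZ, covers_singleton.2 hZx,
      hPY, hPZx, hYZx⟩
  · exact ⟨by simp, P, List.mem_append_left _ hP, X, List.mem_append_left _ hX, Zy, hZyZ,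
      covers_singleton.2 hZy, hPX, hPZy, hXZy⟩

variable {c m : ℝ} {hm : 0 < m}

variable (c m hm) in
/-- In the coordinates of `ofGrid c m hm`, the zone of a stage is `[0, 24)` and all its
arrivals have length `4`. -/
def IsStageCell (I : Ivl) : Prop :=
  I.toSet ⊆ (ofGrid c m hm 0 24).toSet ∧ I.length = 4 * m

/-- `[8, 12)` was refused, so the solution is still `s`: try `[16, 20)`; if that is refused
too, the gap `[12, 14)` between them is the next zone. -/
lemma Reaches.exists_stageEnd_of_refused (hr : r < 1)
    (h : Reaches F hF (IsStageCell c m hm) r 1 s σ s) (hσ : ofGrid c m hm 8 12 ∈ σ)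
    (hs : s.card ≤ 1) (hcov : Covers s (ofGrid c m hm 0 24)) :
    ∃ σ t, Reaches F hF (IsStageCell c m hm) r 4 s σ t ∧ StageEnd (ofGrid c m hm 0 24) σ t := by
  obtain ⟨N, hN, h'⟩ := h.exists_block (C := ofGrid c m hm 16 20)
    (by norm_num [IsStageCell, ofGrid_subset_ofGrid_iff, length_ofGrid]) hr
  have hmem : ofGrid c m hm 16 20 ∈ σ ++ List.replicate N (ofGrid c m hm 16 20) := by simp [hN]
  rcases blockOutcome_of_covers hcov (C := ofGrid c m hm 16 20)
    (by norm_num [ofGrid_subset_ofGrid_iff]) with e | e <;> rw [e] at h'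
  · refine ⟨_, _, h'.mono (fun _ => id) hr.le (by norm_num), hs, ofGrid c m hm 8 12,
      List.mem_append_left _ hσ, ofGrid c m hm 16 20, hmem, ofGrid c m hm 12 14, ?_,
      hcov.mono ?_, ?_, ?_, ?_⟩
    all_goals norm_num [conflict_ofGrid_iff, ofGrid_subset_ofGrid_iff]
  · refine h'.exists_stageEnd_of_partner (Y := ofGrid c m hm 18 22) (Zx := ofGrid c m hm 16 18)
      (Zy := ofGrid c m hm 20 22) hr (by norm_num) ?_ hmem (List.mem_append_left _ hσ)
      ?_ ?_ ?_ ?_ ?_ ?_ ?_ ?_ ?_ ?_ ?_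
    all_goals norm_num [IsStageCell, conflict_ofGrid_iff, ofGrid_subset_ofGrid_iff, length_ofGrid]

/-- `[8, 12)` was kept and `[11, 15)` refused: `[5, 9)` either leaves the gap `[9, 11)` or
replaces `[8, 12)` and is finished off with partner `[11, 15)`. -/
lemma Reaches.exists_stageEnd_of_kept (hr : r < 1)
    (h : Reaches F hF (IsStageCell c m hm) r 2 s σ {ofGrid c m hm 8 12})
    (hσ : ofGrid c m hm 11 15 ∈ σ) :
    ∃ σ t, Reaches F hF (IsStageCell c m hm) r 4 s σ t ∧ StageEnd (ofGrid c m hm 0 24) σ t := by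
  obtain ⟨N, hN, h'⟩ := h.exists_block (C := ofGrid c m hm 5 9)
    (by norm_num [IsStageCell, ofGrid_subset_ofGrid_iff, length_ofGrid]) hr
  have hmem : ofGrid c m hm 5 9 ∈ σ ++ List.replicate N (ofGrid c m hm 5 9) := by simp [hN]
  rcases blockOutcome_singleton (F := F) (X := ofGrid c m hm 8 12) (C := ofGrid c m hm 5 9)
    (by norm_num [conflict_ofGrid_iff]) with e | e <;> rw [e] at h'
  · refine ⟨_, _, h'.mono (fun _ => id) hr.le (by norm_num), by simp, ofGrid c m hm 5 9, hmem,
      ofGrid c m hm 11 15, List.mem_append_left _ hσ, ofGrid c m hm 9 11, ?_,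
      covers_singleton.2 ?_, ?_, ?_, ?_⟩
    all_goals norm_num [conflict_ofGrid_iff, ofGrid_subset_ofGrid_iff]
  · refine h'.exists_stageEnd_of_partner (Y := ofGrid c m hm 3 7) (Zx := ofGrid c m hm 7 9)
      (Zy := ofGrid c m hm 3 5) hr (by norm_num) ?_ hmem (List.mem_append_left _ hσ)
      ?_ ?_ ?_ ?_ ?_ ?_ ?_ ?_ ?_ ?_ ?_
    all_goals norm_num [IsStageCell, conflict_ofGrid_iff, ofGrid_subset_ofGrid_iff, length_ofGrid]

/-- `[11, 15)` replaced `[8, 12)`: `[14, 18)` either leaves the gap `[12, 14)` or replaces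
`[11, 15)` and is finished off with partner `[8, 12)`. -/
lemma Reaches.exists_stageEnd_of_replaced (hr : r < 1)
    (h : Reaches F hF (IsStageCell c m hm) r 2 s σ {ofGrid c m hm 11 15})
    (hσ : ofGrid c m hm 8 12 ∈ σ) :
    ∃ σ t, Reaches F hF (IsStageCell c m hm) r 4 s σ t ∧ StageEnd (ofGrid c m hm 0 24) σ t := by
  obtain ⟨N, hN, h'⟩ := h.exists_block (C := ofGrid c m hm 14 18)
    (by norm_num [IsStageCell, ofGrid_subset_ofGrid_iff, length_ofGrid]) hr
  have hmem : ofGrid c m hm 14 18 ∈ σ ++ List.replicate N (ofGrid c m hm 14 18) := by simp [hN]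
  rcases blockOutcome_singleton (F := F) (X := ofGrid c m hm 11 15) (C := ofGrid c m hm 14 18)
    (by norm_num [conflict_ofGrid_iff]) with e | e <;> rw [e] at h'
  · refine ⟨_, _, h'.mono (fun _ => id) hr.le (by norm_num), by simp, ofGrid c m hm 8 12,
      List.mem_append_left _ hσ, ofGrid c m hm 14 18, hmem, ofGrid c m hm 12 14, ?_,
      covers_singleton.2 ?_, ?_, ?_, ?_⟩
    all_goals norm_num [conflict_ofGrid_iff, ofGrid_subset_ofGrid_iff]
  · refine h'.exists_stageEnd_of_partner (Y := ofGrid c m hm 16 20) (Zx := ofGrid c m hm 14 16)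
      (Zy := ofGrid c m hm 18 20) hr (by norm_num) ?_ hmem (List.mem_append_left _ hσ)
      ?_ ?_ ?_ ?_ ?_ ?_ ?_ ?_ ?_ ?_ ?_
    all_goals norm_num [IsStageCell, conflict_ofGrid_iff, ofGrid_subset_ofGrid_iff, length_ofGrid]

lemma Reaches.exists_stageEnd_of_accepted (hr : r < 1)
    (h : Reaches F hF (IsStageCell c m hm) r 1 s σ {ofGrid c m hm 8 12})
    (hσ : ofGrid c m hm 8 12 ∈ σ) :
    ∃ σ t, Reaches F hF (IsStageCell c m hm) r 4 s σ t ∧ StageEnd (ofGrid c m hm 0 24) σ t := by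
  obtain ⟨N, hN, h'⟩ := h.exists_block (C := ofGrid c m hm 11 15)
    (by norm_num [IsStageCell, ofGrid_subset_ofGrid_iff, length_ofGrid]) hr
  have hmem : ofGrid c m hm 11 15 ∈ σ ++ List.replicate N (ofGrid c m hm 11 15) := by simp [hN]
  rcases blockOutcome_singleton (F := F) (X := ofGrid c m hm 8 12) (C := ofGrid c m hm 11 15)
    (by norm_num [conflict_ofGrid_iff]) with e | e <;> rw [e] at h'
  exacts [h'.exists_stageEnd_of_kept hr hmem,
    h'.exists_stageEnd_of_replaced hr (List.mem_append_left _ hσ)]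

lemma exists_reaches_stageEnd (hr : r < 1) (hs : s.card ≤ 1)
    (hcov : Covers s (ofGrid c m hm 0 24)) :
    ∃ σ t, Reaches F hF (IsStageCell c m hm) r 4 s σ t ∧ StageEnd (ofGrid c m hm 0 24) σ t := by
  have h₀ : Reaches F hF (IsStageCell c m hm) r 0 s [] s := Reaches.nil
  obtain ⟨N, hN, h⟩ := h₀.exists_block (C := ofGrid c m hm 8 12)
    (by norm_num [IsStageCell, ofGrid_subset_ofGrid_iff, length_ofGrid]) hr
  have hmem : ofGrid c m hm 8 12 ∈ [] ++ List.replicate N (ofGrid c m hm 8 12) := by simp [hN]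
  rcases blockOutcome_of_covers hcov (C := ofGrid c m hm 8 12)
    (by norm_num [ofGrid_subset_ofGrid_iff]) with e | e <;> rw [e] at h
  exacts [h.exists_stageEnd_of_refused hr hmem hs hcov, h.exists_stageEnd_of_accepted hr hmem]

lemma exists_hard_instance (hr : r < 1) (k : ℕ) {s : Finset Ivl} {Z : Ivl} (hs : s.card ≤ 1)
    (hcov : Covers s Z) :
    ∃ σ t G, Reaches F hF (fun I => I.toSet ⊆ Z.toSet) r (4 * k) s σ t ∧ t.card ≤ 1 ∧
      (σ.map length).toFinset.card ≤ k ∧ G ⊆ σ.toFinset ∧ Feasible G ∧ G.card = 2 * k := by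
  induction k generalizing s Z with
  | zero => exact ⟨[], s, ∅, Reaches.nil, hs, by simp, by simp, by simp [Feasible], rfl⟩
  | succ k ih =>
    obtain ⟨c, m, hm, rfl⟩ := Z.exists_eq_ofGrid (n := 24) (by norm_num)
    obtain ⟨σ₁, t₁, h₁, ht₁, G₁, hG₁, G₂, hG₂, Z', hZ', hcov', h₁₂, h₁Z', h₂Z'⟩ :=
      exists_reaches_stageEnd (F := F) (hF := hF) hr hs hcov
    obtain ⟨σ₂, t₂, G, h₂, ht₂, hlen, hGσ, hG, hGcard⟩ := ih ht₁ hcov'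
    obtain ⟨hfeas, hcard⟩ := feasible_insert_insert hG
      (fun I hI => h₂.good I (List.mem_toFinset.1 (hGσ hI))) h₁₂ h₁Z' h₂Z'
    refine ⟨σ₁ ++ σ₂, t₂, insert G₁ (insert G₂ G), ?_, ht₂, ?_, ?_, hfeas,
      by rw [hcard, hGcard]; ring⟩
    · have h := (h₁.mono (fun I hI => hI.1) hr.le le_rfl).append
        (h₂.mono (fun I hI => hI.trans hZ') hr.le le_rfl)
      rwa [show 4 + 4 * k = 4 * (k + 1) by ring] at h
    · rw [List.map_append, List.toFinset_append]
      refine (Finset.card_union_le _ _).trans ?_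
      have := List.card_toFinset_map_le_one fun I hI => (h₁.good I hI).2
      omega
    · intro I hI
      simp only [Finset.mem_insert, List.mem_toFinset, List.mem_append] at hI ⊢
      rcases hI with rfl | rfl | hI
      exacts [Or.inl hG₁, Or.inl hG₂, Or.inr (List.mem_toFinset.1 (hGσ hI))]

end Memoryless

lemma ENNReal.exists_lt_one_le_pow {q : ℝ≥0∞} (hq : q < 1) (n : ℕ) : ∃ r < 1, q ≤ r ^ n := by
  have hev : ∀ᶠ r in nhdsWithin (1 : ℝ≥0∞) (Set.Iio 1), q < r ^ n :=
    (((ENNReal.continuous_pow n).tendsto 1).mono_left nhdsWithin_le_nhds).eventually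
      (lt_mem_nhds (by rwa [one_pow]))
  obtain ⟨r, hqr, hr⟩ := (hev.and self_mem_nhdsWithin).exists
  exact ⟨r, hr, hqr.le⟩

theorem memoryless_randomized_lower_bound_two_k_general (F : Ivl → Finset Ivl → ℝ)
    (hF : ∀ (I : Ivl) (S : Finset Ivl), F I S ∈ Set.Icc (0 : ℝ) 1)
    (k : ℕ) (p : ℝ) (hp : p ∈ Set.Ioo (0 : ℝ) 1) :
    ∃ σ : List Ivl, (σ.map Ivl.length).toFinset.card ≤ k ∧ 2 * k ≤ opt σ ∧
      ENNReal.ofReal p ≤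
        (memRun F hF σ).toOuterMeasure {S : Finset Ivl | S.card ≤ 1} := by
  obtain ⟨r, hr, hpr⟩ := ENNReal.exists_lt_one_le_pow (ENNReal.ofReal_lt_one.2 hp.2) (4 * k)
  obtain ⟨σ, t, G, hrun, ht, hlen, hGσ, hG, hGcard⟩ := exists_hard_instance (F := F) (hF := hF)
    hr k (s := ∅) (Z := ⟨0, 1, one_pos⟩) (by simp) (by simp [Covers])
  refine ⟨σ, hlen, hGcard ▸ card_le_opt hGσ hG, ?_⟩
  calc ENNReal.ofReal p ≤ r ^ (4 * k) := hpr
    _ ≤ memRun F hF σ t := hrun.pow_le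
    _ = (memRun F hF σ).toOuterMeasure {t} := (PMF.toOuterMeasure_apply_singleton _ _).symm
    _ ≤ _ := MeasureTheory.measure_mono (Set.singleton_subset_iff.2 ht)

/-- No memoryless randomized algorithm beats `2k` for unweighted interval selection with
revocable decisions and `k` distinct lengths: for every acceptance-probability function `F`
and every `p ∈ (0,1)`, there is an instance with at most `k` distinct lengths whose optimum
is at least `2k`, on which the final solution has at most one interval with probability at
least `p`. -/
theorem memoryless_randomized_lower_bound_two_k (F : Ivl → Finset Ivl → ℝ)
    (hF : ∀ (I : Ivl) (S : Finset Ivl), F I S ∈ Set.Icc (0 : ℝ) 1)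
    (k : ℕ) (hk : 1 ≤ k) (p : ℝ) (hp : p ∈ Set.Ioo (0 : ℝ) 1) :
    ∃ σ : List Ivl, (σ.map Ivl.length).toFinset.card ≤ k ∧ 2 * k ≤ opt σ ∧
      ENNReal.ofReal p ≤
        (memRun F hF σ).toOuterMeasure {S : Finset Ivl | S.card ≤ 1} :=
  memoryless_randomized_lower_bound_two_k_general F hF k p hp
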